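/- arXiv:1605.07421 — 3 statements merged into one kernel-verified Lean document; each statement's English description precedes it below -/
import Mathlib

section
/- Let H be a real Hilbert space and let A, B ⊆ H be nonempty closed convex sets. For all α, β ∈ (0, 1), the AAMR operator T_{A,B,α,β} = (1−α)I + α(2βP_B − I)(2βP_A − I) is α-averaged, i.e., there exists a nonexpansive operator R : H → H with T_{A,B,α,β} = (1−α)I + αR; in particular T_{A,B,α,β} is nonexpansive. Moreover, if α ∈ (0, 1/2], then T_{A,B,α,β} is firmly nonexpansive, i.e., ⟨x − y, T(x) − T(y)⟩ ≥ ‖T(x) − T(y)‖² for all x, y ∈ H. -/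
/-!
A nearest-point map onto a convex set is firmly nonexpansive, by the variational
characterisation `⟪x - P x, c - P x⟫ ≤ 0` of nearest points. For a firmly nonexpansive `P`
and `0 ≤ λ ≤ 2` the map `λ P - I` is nonexpansive, so `R = (2βP_B - I)(2βP_A - I)` is
nonexpansive and `T = (1 - α)I + αR` is `α`-averaged, hence nonexpansive. When `α ≤ 1/2`,
`2T - I = (1 - 2α)I + 2αR` is again nonexpansive, which is equivalent to `T` being firmly
nonexpansive.
-/

open RealInnerProductSpace

def Nonexpansive {E : Type*} [SeminormedAddCommGroup E] (f : E → E) : Prop :=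
  ∀ x y, ‖f x - f y‖ ≤ ‖x - y‖

def FirmlyNonexpansive {H : Type*} [NormedAddCommGroup H] [InnerProductSpace ℝ H]
    (f : H → H) : Prop :=
  ∀ x y, ‖f x - f y‖ ^ 2 ≤ ⟪x - y, f x - f y⟫

theorem Nonexpansive.comp {E : Type*} [SeminormedAddCommGroup E] {f g : E → E}
    (hg : Nonexpansive g) (hf : Nonexpansive f) : Nonexpansive (g ∘ f) :=
  fun x y => (hg (f x) (f y)).trans (hf x y)

theorem Nonexpansive.relax {E : Type*} [SeminormedAddCommGroup E] [NormedSpace ℝ E]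
    {R : E → E} (hR : Nonexpansive R) {t : ℝ} (ht₀ : 0 ≤ t) (ht₁ : t ≤ 1) :
    Nonexpansive fun x => (1 - t) • x + t • R x := by
  intro x y
  calc ‖((1 - t) • x + t • R x) - ((1 - t) • y + t • R y)‖
      = ‖(1 - t) • (x - y) + t • (R x - R y)‖ := by congr 1; module
    _ ≤ ‖(1 - t) • (x - y)‖ + ‖t • (R x - R y)‖ := norm_add_le _ _
    _ = (1 - t) * ‖x - y‖ + t * ‖R x - R y‖ := by
      rw [norm_smul, norm_smul, Real.norm_of_nonneg (by linarith), Real.norm_of_nonneg ht₀]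
    _ ≤ (1 - t) * ‖x - y‖ + t * ‖x - y‖ := by gcongr; exact hR x y
    _ = ‖x - y‖ := by ring

section

variable {H : Type*} [NormedAddCommGroup H] [InnerProductSpace ℝ H]

theorem real_inner_sub_le_zero_of_forall_norm_sub_le {C : Set H} (hC : Convex ℝ C) {x p : H}
    (hp : p ∈ C) (hmin : ∀ c ∈ C, ‖x - p‖ ≤ ‖x - c‖) {w : H} (hw : w ∈ C) :
    ⟪x - p, w - p⟫ ≤ 0 := by
  have : Nonempty C := ⟨⟨p, hp⟩⟩
  have hbdd : BddBelow (Set.range fun c : C => ‖x - c‖) :=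
    ⟨0, by rintro r ⟨c, rfl⟩; exact norm_nonneg _⟩
  refine (norm_eq_iInf_iff_real_inner_le_zero hC hp).mp ?_ w hw
  exact le_antisymm (le_ciInf fun c => hmin c c.2) (ciInf_le hbdd ⟨p, hp⟩)

theorem firmlyNonexpansive_of_forall_norm_sub_le {C : Set H} (hC : Convex ℝ C) {P : H → H}
    (hP : ∀ x, P x ∈ C ∧ ∀ c ∈ C, ‖x - P x‖ ≤ ‖x - c‖) : FirmlyNonexpansive P := by
  intro x y
  have hx := real_inner_sub_le_zero_of_forall_norm_sub_le hC (hP x).1 (hP x).2 (hP y).1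
  have hy := real_inner_sub_le_zero_of_forall_norm_sub_le hC (hP y).1 (hP y).2 (hP x).1
  have key : ⟪x - y, P x - P y⟫ - ‖P x - P y‖ ^ 2 =
      -⟪x - P x, P y - P x⟫ - ⟪y - P y, P x - P y⟫ := by
    simp only [← real_inner_self_eq_norm_sq, inner_sub_left, inner_sub_right]
    ring
  linarith

theorem FirmlyNonexpansive.nonexpansive_smul_sub {P : H → H} (hP : FirmlyNonexpansive P)
    {l : ℝ} (hl₀ : 0 ≤ l) (hl₂ : l ≤ 2) : Nonexpansive fun x => l • P x - x := by
  intro x y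
  have hdiff : (l • P x - x) - (l • P y - y) = l • (P x - P y) - (x - y) := by module
  have hfirm := hP x y
  have hl : l * (l - 2) * ‖P x - P y‖ ^ 2 ≤ 0 :=
    mul_nonpos_of_nonpos_of_nonneg (mul_nonpos_of_nonneg_of_nonpos hl₀ (by linarith))
      (sq_nonneg _)
  rw [← sq_le_sq₀ (norm_nonneg _) (norm_nonneg _), hdiff, norm_sub_sq_real,
    real_inner_smul_left, norm_smul, Real.norm_of_nonneg hl₀, real_inner_comm]
  nlinarith

theorem firmlyNonexpansive_of_nonexpansive_two_smul_sub {T : H → H}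
    (hT : Nonexpansive fun x => (2 : ℝ) • T x - x) : FirmlyNonexpansive T := by
  intro x y
  have hdiff : ((2 : ℝ) • T x - x) - ((2 : ℝ) • T y - y) = (2 : ℝ) • (T x - T y) - (x - y) := by
    module
  have hsq := pow_le_pow_left₀ (norm_nonneg _) (hT x y) 2
  rw [hdiff, norm_sub_sq_real, real_inner_smul_left, norm_smul, Real.norm_two,
    real_inner_comm] at hsq
  nlinarith

theorem Nonexpansive.firmlyNonexpansive_relax {R : H → H} (hR : Nonexpansive R) {t : ℝ}
    (ht₀ : 0 ≤ t) (ht : t ≤ 1 / 2) : FirmlyNonexpansive fun x => (1 - t) • x + t • R x := by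
  apply firmlyNonexpansive_of_nonexpansive_two_smul_sub
  convert hR.relax (t := 2 * t) (by linarith) (by linarith) using 2 with x
  module

end

theorem stmt_2_general {H : Type*} [NormedAddCommGroup H] [InnerProductSpace ℝ H]
    (A B : Set H) (hAv : Convex ℝ A) (hBv : Convex ℝ B)
    (PA PB : H → H)
    (hPA : ∀ x, PA x ∈ A ∧ ∀ c ∈ A, ‖x - PA x‖ ≤ ‖x - c‖)
    (hPB : ∀ x, PB x ∈ B ∧ ∀ c ∈ B, ‖x - PB x‖ ≤ ‖x - c‖)
    (α β : ℝ) (hα : α ∈ Set.Ioo (0 : ℝ) 1) (hβ : β ∈ Set.Ioo (0 : ℝ) 1)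
    (T : H → H)
    (hT : ∀ x, T x =
      (1 - α) • x + α • ((2 * β) • PB ((2 * β) • PA x - x) - ((2 * β) • PA x - x))) :
    (∃ R : H → H, (∀ x y, ‖R x - R y‖ ≤ ‖x - y‖) ∧ ∀ x, T x = (1 - α) • x + α • R x) ∧
    (∀ x y, ‖T x - T y‖ ≤ ‖x - y‖) ∧
    (α ≤ 1 / 2 → ∀ x y, ⟪x - y, T x - T y⟫ ≥ ‖T x - T y‖ ^ 2) := by
  obtain ⟨hα₀, hα₁⟩ := hα
  obtain ⟨hβ₀, hβ₁⟩ := hβ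
  have hreflect {C : Set H} (hC : Convex ℝ C) {P : H → H}
      (hP : ∀ x, P x ∈ C ∧ ∀ c ∈ C, ‖x - P x‖ ≤ ‖x - c‖) :
      Nonexpansive fun x => (2 * β) • P x - x :=
    (firmlyNonexpansive_of_forall_norm_sub_le hC hP).nonexpansive_smul_sub (by linarith)
      (by linarith)
  have hR : Nonexpansive fun x => (2 * β) • PB ((2 * β) • PA x - x) - ((2 * β) • PA x - x) :=
    (hreflect hBv hPB).comp (hreflect hAv hPA)
  obtain rfl : T = _ := funext hT
  exact ⟨⟨_, hR, fun _ => rfl⟩, hR.relax hα₀.le hα₁.le,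
    fun hα₂ => hR.firmlyNonexpansive_relax hα₀.le hα₂⟩

/-- The AAMR operator `T_{A,B,α,β} = (1−α)I + α(2βP_B − I)(2βP_A − I)`
is `α`-averaged (hence nonexpansive) for `α, β ∈ (0,1)`, and firmly nonexpansive
whenever `α ∈ (0, 1/2]`. -/
theorem stmt_2 {H : Type*} [NormedAddCommGroup H] [InnerProductSpace ℝ H] [CompleteSpace H]
    (A B : Set H) (hAne : A.Nonempty) (hAc : IsClosed A) (hAv : Convex ℝ A)
    (hBne : B.Nonempty) (hBc : IsClosed B) (hBv : Convex ℝ B)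
    (PA PB : H → H)
    (hPA : ∀ x, PA x ∈ A ∧ ∀ c ∈ A, ‖x - PA x‖ ≤ ‖x - c‖)
    (hPB : ∀ x, PB x ∈ B ∧ ∀ c ∈ B, ‖x - PB x‖ ≤ ‖x - c‖)
    (α β : ℝ) (hα : α ∈ Set.Ioo (0 : ℝ) 1) (hβ : β ∈ Set.Ioo (0 : ℝ) 1)
    (T : H → H)
    (hT : ∀ x, T x =
      (1 - α) • x + α • ((2 * β) • PB ((2 * β) • PA x - x) - ((2 * β) • PA x - x))) :
    (∃ R : H → H, (∀ x y, ‖R x - R y‖ ≤ ‖x - y‖) ∧ ∀ x, T x = (1 - α) • x + α • R x) ∧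
    (∀ x y, ‖T x - T y‖ ≤ ‖x - y‖) ∧
    (α ≤ 1 / 2 → ∀ x y, ⟪x - y, T x - T y⟫ ≥ ‖T x - T y‖ ^ 2) :=
  stmt_2_general A B hAv hBv PA PB hPA hPB α β hα hβ T hT
end

section
/- Let H be a real Hilbert space, let A, B ⊆ H be nonempty closed convex sets, let α, β ∈ (0, 1), and let q ∈ H. Then the AAMR operator T_{A−q,B−q,α,β} (for the translated sets A − q and B − q) has a fixed point if and only if A ∩ B ≠ ∅ and q − P_{A∩B}(q) ∈ N_A(P_{A∩B}(q)) + N_B(P_{A∩B}(q)). -/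
open RealInnerProductSpace Pointwise

/-- The normal cone to a convex set `C` at `x` (empty when `x ∉ C`). -/
def normalCone {H : Type*} [NormedAddCommGroup H] [InnerProductSpace ℝ H]
    (C : Set H) (x : H) : Set H :=
  {u | x ∈ C ∧ ∀ c ∈ C, ⟪u, c - x⟫ ≤ 0}

/-!
Translating by `q` reduces everything to `q = 0`. There, for a fixed point `x` and `u := P_A x`
one has `P_B(2βu − x) = u`, and the normals `x − u` to `A` and `(2βu − x) − u` to `B` at `u` add
up to `−(2 − 2β) u`, so `−u ∈ N_A(u) + N_B(u)`. Conversely, if `−u = n_A + n_B` then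
`u + (2 − 2β) n_A` is fixed, since a projection is determined by its normal-cone
characterisation. A sum of normals to `A` and `B` is normal to `A ∩ B`, which makes `u + q` the
projection of `q` onto `A ∩ B`.
-/

section AAMR

variable {E : Type*} [AddCommGroup E] [Module ℝ E]

def aamr (PA PB : E → E) (α β : ℝ) (x : E) : E :=
  (1 - α) • x + α • ((2 * β) • PB ((2 * β) • PA x - x) - ((2 * β) • PA x - x))

theorem aamr_eq_self_iff {PA PB : E → E} {α β : ℝ} (hα : α ≠ 0) (hβ : β ≠ 0) (x : E) :
    aamr PA PB α β x = x ↔ PB ((2 * β) • PA x - x) = PA x := by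
  have h : aamr PA PB α β x - x = (α * (2 * β)) • (PB ((2 * β) • PA x - x) - PA x) := by
    unfold aamr; module
  rw [← sub_eq_zero, h, smul_eq_zero, sub_eq_zero]
  simp [hα, hβ]

end AAMR

section NormalCone

variable {H : Type*} [NormedAddCommGroup H] [InnerProductSpace ℝ H]

theorem smul_mem_normalCone {C : Set H} {p n : H} (hn : n ∈ normalCone C p) {t : ℝ}
    (ht : 0 ≤ t) : t • n ∈ normalCone C p :=
  ⟨hn.1, fun c hc => by
    rw [real_inner_smul_left]; exact mul_nonpos_of_nonneg_of_nonpos ht (hn.2 c hc)⟩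

theorem normalCone_add_subset_inter (A B : Set H) (p : H) :
    normalCone A p + normalCone B p ⊆ normalCone (A ∩ B) p := by
  rintro _ ⟨nA, hnA, nB, hnB, rfl⟩
  refine ⟨⟨hnA.1, hnB.1⟩, fun c hc => ?_⟩
  rw [inner_add_left]
  exact add_nonpos (hnA.2 c hc.1) (hnB.2 c hc.2)

theorem normalCone_sub_singleton (C : Set H) (q u : H) :
    normalCone (C - {q}) u = normalCone C (u + q) := by
  ext n
  simp only [normalCone, Set.sub_singleton, Set.mem_image, sub_eq_iff_eq_add,
    exists_eq_right]
  refine and_congr_right fun _ => ⟨fun h c hc => ?_, fun h c hc => ?_⟩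
  · simpa [sub_sub, add_comm q] using h (c - q) (by simpa using hc)
  · simpa using h (c + q) hc

theorem sub_mem_normalCone_iff {C : Set H} (hC : Convex ℝ C) {x u : H} :
    x - u ∈ normalCone C u ↔ u ∈ C ∧ ∀ c ∈ C, ‖x - u‖ ≤ ‖x - c‖ := by
  refine and_congr_right fun hu => ?_
  have : Nonempty C := ⟨⟨u, hu⟩⟩
  have hbdd : BddBelow (Set.range fun w : C => ‖x - w‖) :=
    ⟨0, by rintro _ ⟨w, rfl⟩; exact norm_nonneg _⟩
  rw [← norm_eq_iInf_iff_real_inner_le_zero hC hu]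
  constructor
  · intro h c hc
    rw [h]
    exact ciInf_le hbdd ⟨c, hc⟩
  · intro h
    exact le_antisymm (le_ciInf fun w => h w w.2) (ciInf_le hbdd ⟨u, hu⟩)

theorem eq_of_sub_mem_normalCone {C : Set H} {x u v : H} (hu : x - u ∈ normalCone C u)
    (hv : x - v ∈ normalCone C v) : u = v := by
  have h : ⟪v - u, v - u⟫ ≤ 0 := by
    have := add_nonpos (hu.2 v hv.1) (hv.2 u hu.1)
    rw [← neg_sub v u, inner_neg_right, ← sub_eq_add_neg, ← inner_sub_left] at this
    simpa using this
  rw [real_inner_self_nonpos, sub_eq_zero] at h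
  exact h.symm

theorem exists_aamr_eq_self_iff {A B : Set H} {PA PB : H → H}
    (hPA : ∀ x, x - PA x ∈ normalCone A (PA x)) (hPB : ∀ x, x - PB x ∈ normalCone B (PB x))
    {α β : ℝ} (hα : α ≠ 0) (hβ₀ : 0 < β) (hβ₁ : β < 1) :
    (∃ x, aamr PA PB α β x = x) ↔ ∃ u, -u ∈ normalCone A u + normalCone B u := by
  have hc : 0 < 2 - 2 * β := by linarith
  simp only [aamr_eq_self_iff hα hβ₀.ne']
  constructor
  · rintro ⟨x, hx⟩
    set u := PA x
    set y := (2 * β) • u - x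
    have hu : -u = (2 - 2 * β)⁻¹ • (x - u) + (2 - 2 * β)⁻¹ • (y - u) := by
      rw [← smul_add, eq_inv_smul_iff₀ hc.ne']
      module
    refine ⟨u, hu ▸ Set.add_mem_add (smul_mem_normalCone (hPA x) (inv_nonneg.2 hc.le)) ?_⟩
    simpa only [hx] using smul_mem_normalCone (hPB y) (inv_nonneg.2 hc.le)
  · rintro ⟨u, nA, hnA, nB, hnB, hn : nA + nB = -u⟩
    have hxA : (u + (2 - 2 * β) • nA) - u ∈ normalCone A u := by
      rw [add_sub_cancel_left]
      exact smul_mem_normalCone hnA hc.le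
    have hy_eq : (2 * β) • u - (u + (2 - 2 * β) • nA) = u + (2 - 2 * β) • nB := by
      rw [eq_sub_of_add_eq hn]
      module
    have hyB : (u + (2 - 2 * β) • nB) - u ∈ normalCone B u := by
      rw [add_sub_cancel_left]
      exact smul_mem_normalCone hnB hc.le
    refine ⟨u + (2 - 2 * β) • nA, ?_⟩
    rw [eq_of_sub_mem_normalCone (hPA _) hxA, hy_eq]
    exact eq_of_sub_mem_normalCone (hPB _) hyB

end NormalCone

theorem stmt_6_general {H : Type*} [NormedAddCommGroup H] [InnerProductSpace ℝ H]
    (A B : Set H) (hAv : Convex ℝ A) (hBv : Convex ℝ B)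
    (q : H) (PAq PBq : H → H)
    (hPAq : ∀ x, PAq x ∈ A - {q} ∧ ∀ c ∈ A - {q}, ‖x - PAq x‖ ≤ ‖x - c‖)
    (hPBq : ∀ x, PBq x ∈ B - {q} ∧ ∀ c ∈ B - {q}, ‖x - PBq x‖ ≤ ‖x - c‖)
    (α β : ℝ) (hα : α ∈ Set.Ioo (0 : ℝ) 1) (hβ : β ∈ Set.Ioo (0 : ℝ) 1)
    (T : H → H)
    (hT : ∀ x, T x =
      (1 - α) • x + α • ((2 * β) • PBq ((2 * β) • PAq x - x) - ((2 * β) • PAq x - x))) :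
    (∃ x, T x = x) ↔
      ∃ p, (p ∈ A ∩ B ∧ ∀ y ∈ A ∩ B, ‖q - p‖ ≤ ‖q - y‖) ∧
        q - p ∈ normalCone A p + normalCone B p := by
  have hnormal {C : Set H} (hC : Convex ℝ C) {P : H → H}
      (hP : ∀ x, P x ∈ C - {q} ∧ ∀ c ∈ C - {q}, ‖x - P x‖ ≤ ‖x - c‖) (x : H) :
      x - P x ∈ normalCone (C - {q}) (P x) :=
    (sub_mem_normalCone_iff (hC.sub (convex_singleton q))).2 (hP x)
  have hT' : T = aamr PAq PBq α β := funext hT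
  rw [hT', exists_aamr_eq_self_iff (hnormal hAv hPAq) (hnormal hBv hPBq) hα.1.ne' hβ.1 hβ.2]
  constructor
  · rintro ⟨u, hu⟩
    rw [normalCone_sub_singleton, normalCone_sub_singleton, ← sub_add_cancel_right q u] at hu
    exact ⟨u + q, (sub_mem_normalCone_iff (hAv.inter hBv)).1
      (normalCone_add_subset_inter A B _ hu), hu⟩
  · rintro ⟨p, -, hp⟩
    refine ⟨p - q, ?_⟩
    rwa [normalCone_sub_singleton, normalCone_sub_singleton, sub_add_cancel, neg_sub]

/-- The AAMR operator `T_{A−q,B−q,α,β}` has a fixed point if and only if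
`A ∩ B ≠ ∅` and `q − P_{A∩B}(q) ∈ N_A(P_{A∩B}(q)) + N_B(P_{A∩B}(q))`; here `P_{A∩B}(q)`
is encoded as the point `p ∈ A ∩ B` nearest to `q`. -/
theorem stmt_6 {H : Type*} [NormedAddCommGroup H] [InnerProductSpace ℝ H] [CompleteSpace H]
    (A B : Set H) (hAne : A.Nonempty) (hAc : IsClosed A) (hAv : Convex ℝ A)
    (hBne : B.Nonempty) (hBc : IsClosed B) (hBv : Convex ℝ B)
    (q : H) (PAq PBq : H → H)
    (hPAq : ∀ x, PAq x ∈ A - {q} ∧ ∀ c ∈ A - {q}, ‖x - PAq x‖ ≤ ‖x - c‖)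
    (hPBq : ∀ x, PBq x ∈ B - {q} ∧ ∀ c ∈ B - {q}, ‖x - PBq x‖ ≤ ‖x - c‖)
    (α β : ℝ) (hα : α ∈ Set.Ioo (0 : ℝ) 1) (hβ : β ∈ Set.Ioo (0 : ℝ) 1)
    (T : H → H)
    (hT : ∀ x, T x =
      (1 - α) • x + α • ((2 * β) • PBq ((2 * β) • PAq x - x) - ((2 * β) • PAq x - x))) :
    (∃ x, T x = x) ↔
      ∃ p, (p ∈ A ∩ B ∧ ∀ y ∈ A ∩ B, ‖q - p‖ ≤ ‖q - y‖) ∧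
        q - p ∈ normalCone A p + normalCone B p :=
  stmt_6_general A B hAv hBv q PAq PBq hPAq hPBq α β hα hβ T hT
end

section
/- Let H be a real Hilbert space, let A, B ⊆ H be closed affine subspaces with A ∩ B ≠ ∅, let α, β ∈ (0, 1), and let q ∈ H satisfy q − P_{A∩B}(q) ∈ (A − A)^⊥ + (B − B)^⊥. Given any x₀ ∈ H, define x_{n+1} = T_{A−q,B−q,α,β}(x_n) for n ≥ 0. Then the set Fix T_{A−q,B−q,α,β} is nonempty, closed and convex, and the sequence (x_n) converges strongly (in norm) to the projection of x₀ onto Fix T_{A−q,B−q,α,β}. -/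
/-!
Since `A` and `B` are affine, `P_{A-q}` and `P_{B-q}` are affine maps whose linear parts are the
orthogonal projections onto `U = A - A` and `V = B - B`, so `T = T_{A-q,B-q,α,β}` is affine:
`T x = z + Q (x - z)` with `Q = (1-α) I + α R_V R_U`, `R_K = 2β P_K - I`. Writing
`q - p = u + v` with `u ∈ Uᗮ`, `v ∈ Vᗮ`, the point `z = (p - q) + (2 - 2β) u` is fixed by `T`.

The relaxed reflections are nonexpansive, so `Q` is `α`-averaged:
`(1-α)/α ‖y - Q y‖² ≤ ‖y‖² - ‖Q y‖²`. Telescoping gives `Qⁿ (Q y - y) → 0`, and since a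
linear contraction fixes exactly the vectors its adjoint fixes, the range of `Q - I` is dense in
`(Fix Q)ᗮ`. Hence `Qⁿ y → P_{Fix Q} y`, and `xₙ = z + Qⁿ (x₀ - z)` tends to
`z + P_{Fix Q} (x₀ - z)`, the nearest point to `x₀` of `Fix T = z + Fix Q`.
-/

open RealInnerProductSpace Pointwise Filter Topology

section

variable {E : Type*} [NormedAddCommGroup E] [InnerProductSpace ℝ E]

theorem Submodule.mem_singleton_add_sub_singleton_iff {R M : Type*} [Ring R] [AddCommGroup M]
    [Module R M] (K : Submodule R M) {a p : M} (hp : p ∈ {a} + (K : Set M)) (q y : M) :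
    y ∈ ({a} + (K : Set M)) - {q} ↔ y - (p - q) ∈ K := by
  simp only [Set.sub_singleton, Set.singleton_add, Set.image_image, Set.mem_image,
    SetLike.mem_coe] at hp ⊢
  obtain ⟨m, hm, rfl⟩ := hp
  constructor
  · rintro ⟨m', hm', rfl⟩
    simpa using K.sub_mem hm' hm
  · intro h
    exact ⟨_, K.add_mem h hm, by abel⟩

theorem Submodule.mem_orthogonal_of_forall_inner_sub (K : Submodule ℝ E) {a u : E}
    (hu : ∀ s ∈ ({a} + (K : Set E)) - ({a} + (K : Set E)), ⟪s, u⟫ = 0) : u ∈ Kᗮ := by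
  refine (K.mem_orthogonal u).2 fun m hm ↦ hu m ⟨a + m, Set.add_mem_add rfl hm, a, ?_, ?_⟩ <;>
    simp

theorem norm_one_sub_smul_add_smul_sq (α : ℝ) (y n : E) :
    ‖(1 - α) • y + α • n‖ ^ 2 =
      (1 - α) * ‖y‖ ^ 2 + α * ‖n‖ ^ 2 - α * (1 - α) * ‖y - n‖ ^ 2 := by
  rw [norm_add_sq_real, norm_sub_sq_real, norm_smul, norm_smul, real_inner_smul_left,
    real_inner_smul_right, mul_pow, mul_pow, Real.norm_eq_abs, Real.norm_eq_abs, sq_abs, sq_abs]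
  ring

theorem averaged_norm_sq_le {N : E →L[ℝ] E} (hN : ∀ y, ‖N y‖ ≤ ‖y‖) {α : ℝ}
    (hα : α ∈ Set.Ioo 0 1) (y : E) :
    (1 - α) / α * ‖y - ((1 - α) • 1 + α • N) y‖ ^ 2 ≤
      ‖y‖ ^ 2 - ‖((1 - α) • 1 + α • N) y‖ ^ 2 := by
  obtain ⟨hα0, hα1⟩ := hα
  have hQ : ((1 - α) • 1 + α • N) y = (1 - α) • y + α • N y := by simp
  have hsub : y - ((1 - α) • y + α • N y) = α • (y - N y) := by module
  have hN2 : ‖N y‖ ^ 2 ≤ ‖y‖ ^ 2 := pow_le_pow_left₀ (norm_nonneg _) (hN y) 2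
  have hcoef : (1 - α) / α * (α ^ 2 * ‖y - N y‖ ^ 2) = α * (1 - α) * ‖y - N y‖ ^ 2 := by
    field_simp
  rw [hQ, hsub, norm_one_sub_smul_add_smul_sq, norm_smul, mul_pow, Real.norm_eq_abs, sq_abs]
  nlinarith

namespace Submodule

variable (K : Submodule ℝ E) [K.HasOrthogonalProjection]

theorem norm_sub_starProjection_le (u : E) {v : E} (hv : v ∈ K) :
    ‖u - K.starProjection u‖ ≤ ‖u - v‖ := by
  rw [starProjection_minimal]
  exact ciInf_le ⟨0, by rintro _ ⟨m, rfl⟩; positivity⟩ (⟨v, hv⟩ : K)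

theorem starProjection_eq_of_forall_norm_le {u v : E} (hv : v ∈ K)
    (h : ∀ m ∈ K, ‖u - v‖ ≤ ‖u - m‖) : K.starProjection u = v := by
  refine eq_starProjection_of_mem_of_inner_eq_zero hv
    ((K.norm_eq_iInf_iff_real_inner_eq_zero hv).1 (le_antisymm (le_ciInf fun m ↦ h m m.2) ?_))
  exact ciInf_le ⟨0, by rintro _ ⟨m, rfl⟩; positivity⟩ (⟨v, hv⟩ : K)

theorem eq_add_starProjection_of_forall_norm_le {S : Set E} {w : E}
    (hS : ∀ y, y ∈ S ↔ y - w ∈ K) {x P : E} (hP : P ∈ S)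
    (hmin : ∀ c ∈ S, ‖x - P‖ ≤ ‖x - c‖) :
    P = w + K.starProjection (x - w) := by
  rw [K.starProjection_eq_of_forall_norm_le ((hS P).1 hP) fun m hm ↦ ?_, add_sub_cancel]
  rw [sub_sub_sub_cancel_right, sub_sub]
  exact hmin (w + m) ((hS _).2 (by simpa using hm))

end Submodule

noncomputable def relaxedReflection (K : Submodule ℝ E) [K.HasOrthogonalProjection] (β : ℝ) :
    E →L[ℝ] E :=
  (2 * β) • K.starProjection - 1

/-- The linear part of `T_{A,B,α,β}` when `A - A = U` and `B - B = V`. -/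
noncomputable def aamrLinear (U V : Submodule ℝ E) [U.HasOrthogonalProjection]
    [V.HasOrthogonalProjection] (α β : ℝ) : E →L[ℝ] E :=
  (1 - α) • 1 + α • (relaxedReflection V β * relaxedReflection U β)

section RelaxedReflection

variable (K : Submodule ℝ E) [K.HasOrthogonalProjection] (β : ℝ)

@[simp]
theorem relaxedReflection_apply (y : E) :
    relaxedReflection K β y = (2 * β) • K.starProjection y - y :=
  rfl

theorem norm_relaxedReflection_apply_sq (y : E) :
    ‖relaxedReflection K β y‖ ^ 2 =
      ‖y‖ ^ 2 - 4 * β * (1 - β) * ‖K.starProjection y‖ ^ 2 := by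
  have h : ⟪K.starProjection y, y⟫ = ‖K.starProjection y‖ ^ 2 := by
    simpa using K.re_inner_starProjection_eq_normSq y
  rw [relaxedReflection_apply, norm_sub_sq_real, real_inner_smul_left, h, norm_smul, mul_pow,
    Real.norm_eq_abs, sq_abs]
  ring

variable {β} in
theorem norm_relaxedReflection_apply_le (hβ : β ∈ Set.Icc 0 1) (y : E) :
    ‖relaxedReflection K β y‖ ≤ ‖y‖ := by
  refine (pow_le_pow_iff_left₀ (norm_nonneg _) (norm_nonneg _) two_ne_zero).1 ?_
  rw [norm_relaxedReflection_apply_sq]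
  have : 0 ≤ 4 * β * (1 - β) := by nlinarith [hβ.1, hβ.2]
  nlinarith [sq_nonneg ‖K.starProjection y‖]

theorem smul_add_starProjection_sub_sub {w z : E} (hz : z - w ∈ Kᗮ) (x : E) :
    (2 * β) • (w + K.starProjection (x - w)) - x =
      ((2 * β) • w - z) + relaxedReflection K β (x - z) := by
  have : K.starProjection (x - w) = K.starProjection (x - z) := by
    rw [show x - w = (x - z) + (z - w) by abel, map_add,
      K.starProjection_apply_eq_zero_iff.2 hz, add_zero]
  rw [this, relaxedReflection_apply]
  module

end RelaxedReflection

section AAMR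

variable (U V : Submodule ℝ E) [U.HasOrthogonalProjection] [V.HasOrthogonalProjection]

theorem aamrLinear_norm_sq_le {α β : ℝ} (hα : α ∈ Set.Ioo 0 1) (hβ : β ∈ Set.Icc 0 1)
    (y : E) :
    (1 - α) / α * ‖y - aamrLinear U V α β y‖ ^ 2 ≤ ‖y‖ ^ 2 - ‖aamrLinear U V α β y‖ ^ 2 :=
  averaged_norm_sq_le (fun y ↦
    (norm_relaxedReflection_apply_le V hβ (relaxedReflection U β y)).trans
      (norm_relaxedReflection_apply_le U hβ y)) hα y

theorem aamr_eq_add_aamrLinear (α β : ℝ) {w u v : E} (hu : u ∈ Uᗮ) (hv : v ∈ Vᗮ)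
    (huv : u + v = -w) {PA PB : E → E} (hPA : ∀ x, PA x = w + U.starProjection (x - w))
    (hPB : ∀ x, PB x = w + V.starProjection (x - w)) (x : E) :
    (1 - α) • x + α • ((2 * β) • PB ((2 * β) • PA x - x) - ((2 * β) • PA x - x)) =
      (w + (2 - 2 * β) • u) + aamrLinear U V α β (x - (w + (2 - 2 * β) • u)) := by
  set z := w + (2 - 2 * β) • u
  have hz : z - w ∈ Uᗮ := by simpa [z] using Uᗮ.smul_mem (2 - 2 * β) hu
  have hz' : ((2 * β) • w - z) - w ∈ Vᗮ := by
    convert Vᗮ.smul_mem (2 - 2 * β) hv using 1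
    simp only [z, show w = -(u + v) by rw [huv, neg_neg]]
    module
  rw [hPA, smul_add_starProjection_sub_sub U β hz, hPB, smul_add_starProjection_sub_sub V β hz',
    add_sub_cancel_left, sub_sub_cancel]
  simp only [aamrLinear, add_apply, smul_apply, one_apply_eq_self, mul_apply_eq_comp]
  module

end AAMR

namespace ContinuousLinearMap

theorem tendsto_iterate_apply_sub_self {f : E →L[ℝ] E} {c : ℝ} (hc : 0 < c)
    (hf : ∀ y, c * ‖y - f y‖ ^ 2 ≤ ‖y‖ ^ 2 - ‖f y‖ ^ 2) (y : E) :
    Tendsto (fun n ↦ (⇑f)^[n] (f y - y)) atTop (𝓝 0) := by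
  set a : ℕ → ℝ := fun n ↦ ‖(⇑f)^[n] y‖ ^ 2
  have hstep : ∀ n, c * ‖(⇑f)^[n] (f y - y)‖ ^ 2 ≤ a n - a (n + 1) := fun n ↦ by
    simpa only [a, iterate_map_sub, ← Function.iterate_succ_apply, norm_sub_rev,
      Function.iterate_succ_apply'] using hf ((⇑f)^[n] y)
  have ha : Antitone a := antitone_nat_of_succ_le fun n ↦ by
    nlinarith [hstep n, sq_nonneg ‖(⇑f)^[n] (f y - y)‖]
  obtain ⟨L, hL⟩ : ∃ L, Tendsto a atTop (𝓝 L) :=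
    ⟨_, tendsto_atTop_ciInf ha ⟨0, by rintro _ ⟨n, rfl⟩; positivity⟩⟩
  have hdiff : Tendsto (fun n ↦ (a n - a (n + 1)) / c) atTop (𝓝 0) := by
    simpa using (hL.sub (hL.comp (tendsto_add_atTop_nat 1))).div_const c
  have hsq : Tendsto (fun n ↦ ‖(⇑f)^[n] (f y - y)‖ ^ 2) atTop (𝓝 0) :=
    squeeze_zero (fun n ↦ by positivity)
      (fun n ↦ by rw [le_div_iff₀ hc]; linarith [hstep n]) hdiff
  rw [tendsto_zero_iff_norm_tendsto_zero]
  simpa using hsq.sqrt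

variable [CompleteSpace E]

theorem orthogonal_eqLocus_one_le {f : E →L[ℝ] E} (hf : ∀ y, ‖f y‖ ≤ ‖y‖) :
    (f.eqLocus (1 : E →L[ℝ] E))ᗮ ≤
      (LinearMap.range ((f : E →ₗ[ℝ] E) - 1)).topologicalClosure := by
  rw [← Submodule.orthogonal_orthogonal_eq_closure]
  refine Submodule.orthogonal_le fun x hx ↦
    eq_of_norm_le_re_inner_eq_norm_sq (𝕜 := ℝ) (hf x) ?_
  have : ∀ y, ⟪f y, x⟫ = ⟪y, x⟫ := by
    simpa [Submodule.mem_orthogonal, inner_sub_left, sub_eq_zero] using hx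
  simp [this]

theorem tendsto_iterate_starProjection_eqLocus {f : E →L[ℝ] E} {c : ℝ} (hc : 0 < c)
    (hf : ∀ y, c * ‖y - f y‖ ^ 2 ≤ ‖y‖ ^ 2 - ‖f y‖ ^ 2) (x : E) :
    Tendsto (fun n ↦ (⇑f)^[n] x) atTop
      (𝓝 ((f.eqLocus (1 : E →L[ℝ] E)).starProjection x)) := by
  set F := f.eqLocus (1 : E →L[ℝ] E)
  have hcontr : ∀ y, ‖f y‖ ≤ ‖y‖ := fun y ↦ by
    nlinarith [hf y, norm_nonneg y, norm_nonneg (f y), mul_nonneg hc.le (sq_nonneg ‖y - f y‖)]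
  have hlip : LipschitzWith 1 f := AddMonoidHomClass.lipschitz_of_bound_nnnorm f 1 fun y ↦ by
    simpa [← NNReal.coe_le_coe] using hcontr y
  have hclosed : IsClosed {y : E | Tendsto (fun n ↦ (⇑f)^[n] y) atTop (𝓝 0)} :=
    (LipschitzWith.uniformEquicontinuous _ 1 fun n ↦ by simpa using hlip.iterate n)
      |>.equicontinuous.isClosed_setOfPred_tendsto continuous_const
  have hperp : Tendsto (fun n ↦ (⇑f)^[n] (x - F.starProjection x)) atTop (𝓝 0) := by
    refine closure_minimal ?_ hclosed
      (orthogonal_eqLocus_one_le hcontr (Submodule.sub_starProjection_mem_orthogonal x))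
    rintro _ ⟨y, rfl⟩
    exact tendsto_iterate_apply_sub_self hc hf y
  have hfix : ∀ n, (⇑f)^[n] (F.starProjection x) = F.starProjection x := fun n ↦
    Function.iterate_fixed (F.starProjection_apply_mem x) n
  have := hperp.add_const (F.starProjection x)
  simp only [zero_add, iterate_map_sub, hfix, sub_add_cancel] at this
  exact this

end ContinuousLinearMap

theorem fixedPoints_and_tendsto_of_affine [CompleteSpace E] {Q : E →L[ℝ] E} {c : ℝ}
    (hc : 0 < c) (hQ : ∀ y, c * ‖y - Q y‖ ^ 2 ≤ ‖y‖ ^ 2 - ‖Q y‖ ^ 2) {T : E → E}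
    {z : E} (hT : ∀ x, T x = z + Q (x - z)) (x : ℕ → E) (hx : ∀ n, x (n + 1) = T (x n)) :
    {y | T y = y}.Nonempty ∧ IsClosed {y | T y = y} ∧ Convex ℝ {y | T y = y} ∧
      ∃ w, (w ∈ {y | T y = y} ∧ ∀ y ∈ {y | T y = y}, ‖x 0 - w‖ ≤ ‖x 0 - y‖) ∧
        Tendsto x atTop (𝓝 w) := by
  set F := Q.eqLocus (1 : E →L[ℝ] E)
  have hfix : {y | T y = y} = (fun y ↦ y + -z) ⁻¹' F := by
    ext y
    simp [F, hT, ← sub_eq_add_neg, eq_sub_iff_add_eq']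
  have hiter : ∀ n, x n = z + (⇑Q)^[n] (x 0 - z) := by
    intro n
    induction n with
    | zero => simp
    | succ n ih => rw [hx, hT, ih, add_sub_cancel_left, Function.iterate_succ_apply']
  refine ⟨⟨z, by simp [hT]⟩, ?_, hfix ▸ F.convex.translate_preimage_left (-z),
    z + F.starProjection (x 0 - z), ⟨?_, fun y hy ↦ ?_⟩, ?_⟩
  · simp only [funext hT]
    exact isClosed_eq (by fun_prop) continuous_id
  · rw [hfix, Set.mem_preimage, add_neg_cancel_comm]
    exact F.starProjection_apply_mem _
  · rw [hfix, Set.mem_preimage] at hy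
    convert F.norm_sub_starProjection_le (x 0 - z) hy using 2 <;> abel
  · exact ((Q.tendsto_iterate_starProjection_eqLocus hc hQ (x 0 - z)).const_add z).congr
      fun n ↦ (hiter n).symm

end

theorem stmt_16_general {H : Type*} [NormedAddCommGroup H] [InnerProductSpace ℝ H] [CompleteSpace H]
    (A B : Set H)
    (MA MB : Submodule ℝ H) (hMA : IsClosed (MA : Set H)) (hMB : IsClosed (MB : Set H))
    (a b : H) (hA : A = {a} + (MA : Set H)) (hB : B = {b} + (MB : Set H))
    (α β : ℝ) (hα : α ∈ Set.Ioo (0 : ℝ) 1) (hβ : β ∈ Set.Ioo (0 : ℝ) 1)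
    (q : H)
    (PAq PBq : H → H)
    (hPAq : ∀ x, PAq x ∈ A - {q} ∧ ∀ c ∈ A - {q}, ‖x - PAq x‖ ≤ ‖x - c‖)
    (hPBq : ∀ x, PBq x ∈ B - {q} ∧ ∀ c ∈ B - {q}, ‖x - PBq x‖ ≤ ‖x - c‖)
    (p : H) (hp : p ∈ A ∩ B ∧ ∀ y ∈ A ∩ B, ‖q - p‖ ≤ ‖q - y‖)
    (hCQ : q - p ∈ {u : H | ∀ s ∈ A - A, ⟪s, u⟫ = 0} + {u : H | ∀ s ∈ B - B, ⟪s, u⟫ = 0})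
    (T : H → H)
    (hT : ∀ x, T x =
      (1 - α) • x + α • ((2 * β) • PBq ((2 * β) • PAq x - x) - ((2 * β) • PAq x - x)))
    (x : ℕ → H) (hrec : ∀ n, x (n + 1) = T (x n)) :
    {z | T z = z}.Nonempty ∧ IsClosed {z | T z = z} ∧ Convex ℝ {z | T z = z} ∧
      ∃ w, (w ∈ {z | T z = z} ∧ ∀ z ∈ {z | T z = z}, ‖x 0 - w‖ ≤ ‖x 0 - z‖) ∧
        Tendsto x atTop (nhds w) := by
  subst hA hB
  obtain ⟨⟨hpA, hpB⟩, -⟩ := hp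
  have : CompleteSpace MA := hMA.completeSpace_coe
  have : CompleteSpace MB := hMB.completeSpace_coe
  obtain ⟨u, hu, v, hv, huv : u + v = q - p⟩ := hCQ
  have hPA : ∀ y, PAq y = (p - q) + MA.starProjection (y - (p - q)) := fun y ↦
    MA.eq_add_starProjection_of_forall_norm_le (MA.mem_singleton_add_sub_singleton_iff hpA q)
      (hPAq y).1 (hPAq y).2
  have hPB : ∀ y, PBq y = (p - q) + MB.starProjection (y - (p - q)) := fun y ↦
    MB.eq_add_starProjection_of_forall_norm_le (MB.mem_singleton_add_sub_singleton_iff hpB q)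
      (hPBq y).1 (hPBq y).2
  have hTaff := fun y ↦ (hT y).trans <| aamr_eq_add_aamrLinear MA MB α β
    (MA.mem_orthogonal_of_forall_inner_sub hu) (MB.mem_orthogonal_of_forall_inner_sub hv)
    (by rw [huv, neg_sub]) hPA hPB y
  exact fixedPoints_and_tendsto_of_affine (div_pos (sub_pos.2 hα.2) hα.1)
    (aamrLinear_norm_sq_le MA MB hα (Set.Ioo_subset_Icc_self hβ)) hTaff x hrec

/-- For closed affine subspaces `A, B` with `A ∩ B ≠ ∅` and
`q − P_{A∩B}(q) ∈ (A−A)^⊥ + (B−B)^⊥`, the set of fixed points of `T_{A−q,B−q,α,β}` is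
nonempty, closed and convex, and the AAMR iterates converge strongly to the projection
of `x₀ = x 0` onto this fixed point set. -/
theorem stmt_16 {H : Type*} [NormedAddCommGroup H] [InnerProductSpace ℝ H] [CompleteSpace H]
    (A B : Set H)
    (MA MB : Submodule ℝ H) (hMA : IsClosed (MA : Set H)) (hMB : IsClosed (MB : Set H))
    (a b : H) (hA : A = {a} + (MA : Set H)) (hB : B = {b} + (MB : Set H))
    (hAB : (A ∩ B).Nonempty)
    (α β : ℝ) (hα : α ∈ Set.Ioo (0 : ℝ) 1) (hβ : β ∈ Set.Ioo (0 : ℝ) 1)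
    (q : H)
    (PAq PBq : H → H)
    (hPAq : ∀ x, PAq x ∈ A - {q} ∧ ∀ c ∈ A - {q}, ‖x - PAq x‖ ≤ ‖x - c‖)
    (hPBq : ∀ x, PBq x ∈ B - {q} ∧ ∀ c ∈ B - {q}, ‖x - PBq x‖ ≤ ‖x - c‖)
    (p : H) (hp : p ∈ A ∩ B ∧ ∀ y ∈ A ∩ B, ‖q - p‖ ≤ ‖q - y‖)
    (hCQ : q - p ∈ {u : H | ∀ s ∈ A - A, ⟪s, u⟫ = 0} + {u : H | ∀ s ∈ B - B, ⟪s, u⟫ = 0})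
    (T : H → H)
    (hT : ∀ x, T x =
      (1 - α) • x + α • ((2 * β) • PBq ((2 * β) • PAq x - x) - ((2 * β) • PAq x - x)))
    (x : ℕ → H) (hrec : ∀ n, x (n + 1) = T (x n)) :
    {z | T z = z}.Nonempty ∧ IsClosed {z | T z = z} ∧ Convex ℝ {z | T z = z} ∧
      ∃ w, (w ∈ {z | T z = z} ∧ ∀ z ∈ {z | T z = z}, ‖x 0 - w‖ ≤ ‖x 0 - z‖) ∧
        Tendsto x atTop (nhds w) :=
  stmt_16_general A B MA MB hMA hMB a b hA hB α β hα hβ q PAq PBq hPAq hPBq p hp hCQ T hT x hrec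
end
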